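/- Let (m_{n,k})_{1≤k≤n} be a martingale difference array adapted to filtrations (F_{n,k}) and suppose for some ν > 0 and constant C, E[(m_{n,k})² 1{|m_{n,k}| > ε√n} | F_{n,k−1}] ≤ T_{n,k−1} · C · (T_{n,k−1}/n)^{ν/(2+ν)} / ε^{2ν/(2+ν)} for nonnegative F_{n,k−1}-measurable T_{n,k−1}. If (1/n)∑_{k=1}^n T_{n,k−1} converges in probability to a finite limit and max_k T_{n,k−1}/n → 0 in probability, then the Lindeberg condition (1/n)∑_{k=1}^n E[(m_{n,k})² 1{|m_{n,k}| > ε√n} | F_{n,k−1}] → 0 in probability holds for every ε > 0. -/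

import Mathlib

/-!
On the event that every `T n k / n` is at most `δ`, the assumed bound gives
`L n k ε ≤ (C δ^θ / ε^{2ν/(2+ν)}) · T n k` with `θ = ν / (2 + ν) > 0`, so the average of the
`L n k ε` is at most `C δ^θ / ε^{2ν/(2+ν)}` times the average of the `T n k`. The latter average
is bounded in probability, `δ^θ` can be made as small as we like, and the exceptional event has
vanishing probability.
-/

open MeasureTheory Finset Filter Topology

theorem tendstoInMeasure_zero_of_norm_le_mul {ι Ω E : Type*} {l : Filter ι} [MeasurableSpace Ω]
    {μ : Measure Ω} [SeminormedAddCommGroup E] {X : ι → Ω → E} {Y : ι → Ω → ℝ} {c : ℝ}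
    (hY : TendstoInMeasure μ Y l (fun _ => c))
    (hXY : ∀ a > 0, ∃ B : ι → Set Ω, Tendsto (fun i => μ (B i)) l (𝓝 0) ∧
      ∀ i, ∀ ω ∉ B i, ‖X i ω‖ ≤ a * Y i ω) :
    TendstoInMeasure μ X l 0 := by
  rw [tendstoInMeasure_iff_norm]
  intro η hη
  -- off `{1 ≤ ‖Y i - c‖}` we have `Y i ≤ |c| + 1`, so this choice of `a` gives `‖X i‖ ≤ η / 2`
  obtain ⟨B, hB, hXB⟩ := hXY (η / 2 / (|c| + 1)) (by positivity)
  have hsub : ∀ i, {ω | η ≤ ‖X i ω - 0‖} ⊆ B i ∪ {ω | 1 ≤ ‖Y i ω - c‖} := by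
    intro i ω hω
    by_contra hout
    simp only [Set.mem_union, Set.mem_ofPred_eq, not_or, not_le] at hout hω
    have hYc : Y i ω ≤ |c| + 1 := by
      linarith [le_abs_self c, (abs_lt.mp (Real.norm_eq_abs _ ▸ hout.2)).2]
    have hX := hXB i ω hout.1
    have : η / 2 / (|c| + 1) * Y i ω ≤ η / 2 := by
      calc η / 2 / (|c| + 1) * Y i ω ≤ η / 2 / (|c| + 1) * (|c| + 1) := by gcongr
        _ = η / 2 := by field_simp
    rw [sub_zero] at hω
    linarith
  have hlim := hB.add (tendstoInMeasure_iff_norm.mp hY 1 one_pos)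
  rw [add_zero] at hlim
  exact tendsto_of_tendsto_of_tendsto_of_le_of_le tendsto_const_nhds hlim (fun _ => zero_le)
    fun i => (measure_mono (hsub i)).trans (measure_union_le _ _)

theorem exists_pos_mul_rpow_lt (c : ℝ) {a θ : ℝ} (ha : 0 < a) (hθ : 0 < θ) :
    ∃ δ > 0, c * δ ^ θ < a := by
  have hlim : Tendsto (fun δ : ℝ => c * δ ^ θ) (𝓝[>] 0) (𝓝 0) := by
    have := ((Real.continuousAt_rpow_const 0 θ (Or.inr hθ.le)).tendsto.const_mul c).mono_left
      (nhdsWithin_le_nhds (s := Set.Ioi 0))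
    simpa [Real.zero_rpow hθ.ne'] using this
  obtain ⟨δ, hδa, hδ⟩ := ((hlim.eventually (gt_mem_nhds ha)).and self_mem_nhdsWithin).exists
  exact ⟨δ, hδ, hδa⟩

theorem norm_avg_le_mul_avg {n : ℕ} {f g : ℕ → ℝ} {a : ℝ} (hf : ∀ k < n, 0 ≤ f k)
    (hfg : ∀ k < n, f k ≤ a * g k) :
    ‖(n : ℝ)⁻¹ * ∑ k ∈ range n, f k‖ ≤ a * ((n : ℝ)⁻¹ * ∑ k ∈ range n, g k) := by
  have hf' : ∀ k ∈ range n, 0 ≤ f k := fun k hk => hf k (mem_range.mp hk)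
  rw [Real.norm_of_nonneg (mul_nonneg (by positivity) (sum_nonneg hf'))]
  calc (n : ℝ)⁻¹ * ∑ k ∈ range n, f k ≤ (n : ℝ)⁻¹ * ∑ k ∈ range n, a * g k := by
        gcongr with k hk
        exact hfg k (mem_range.mp hk)
    _ = a * ((n : ℝ)⁻¹ * ∑ k ∈ range n, g k) := by rw [← mul_sum]; ring

theorem mul_mul_rpow_le_mul {t c x δ θ a : ℝ} (ht : 0 ≤ t) (hc : 0 ≤ c) (hθ : 0 ≤ θ)
    (hx : 0 ≤ x) (hxδ : x ≤ δ) (hδ : c * δ ^ θ ≤ a) :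
    t * c * x ^ θ ≤ a * t := by
  calc t * c * x ^ θ ≤ t * c * δ ^ θ := by gcongr
    _ = c * δ ^ θ * t := by ring
    _ ≤ a * t := by gcongr

theorem lindeberg_condition_from_bound_general
    {Ω : Type*} [MeasurableSpace Ω] (μ : Measure Ω)
    (ν C : ℝ) (hν : 0 < ν) (hC : 0 < C)
    (T : ℕ → ℕ → Ω → ℝ) (hT : ∀ n k ω, 0 ≤ T n k ω)
    -- L n k ε is the conditional expectation E[(m_{n,k})² 1{|m_{n,k}| > ε√n} | F_{n,k-1}]
    (L : ℕ → ℕ → ℝ → Ω → ℝ) (hL : ∀ n k ε ω, 0 ≤ L n k ε ω)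
    (hbound : ∀ n k (ε : ℝ), 0 < ε → ∀ ω,
      L n k ε ω ≤ T n k ω * C * (T n k ω / n) ^ (ν / (2 + ν)) / ε ^ (2 * ν / (2 + ν)))
    (ℓlim : ℝ)
    (hTavg : TendstoInMeasure μ
      (fun (n : ℕ) ω => (n : ℝ)⁻¹ * ∑ k ∈ Finset.range n, T n k ω) atTop (fun _ => ℓlim))
    (hTmax : ∀ δ : ℝ, 0 < δ →
      Tendsto (fun n => μ {ω | ∃ k < n, T n k ω / n > δ}) atTop (nhds 0)) :
    ∀ ε : ℝ, 0 < ε →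
      TendstoInMeasure μ
        (fun (n : ℕ) ω => (n : ℝ)⁻¹ * ∑ k ∈ Finset.range n, L n k ε ω) atTop (fun _ => 0) := by
  intro ε hε
  have hθ : 0 < ν / (2 + ν) := by positivity
  set c := C / ε ^ (2 * ν / (2 + ν))
  have hc : 0 ≤ c := by positivity
  refine tendstoInMeasure_zero_of_norm_le_mul hTavg fun a ha => ?_
  obtain ⟨δ, hδ, hδa⟩ := exists_pos_mul_rpow_lt c ha hθ
  refine ⟨_, hTmax δ hδ, fun n ω hω => norm_avg_le_mul_avg (fun k _ => hL n k ε ω) fun k hk => ?_⟩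
  have hTδ : T n k ω / n ≤ δ := not_lt.mp fun h => hω ⟨k, hk, h⟩
  calc L n k ε ω ≤ T n k ω * c * (T n k ω / n) ^ (ν / (2 + ν)) :=
        (hbound n k ε hε ω).trans_eq (by simp only [c]; ring)
    _ ≤ a * T n k ω :=
        mul_mul_rpow_le_mul (hT n k ω) hc hθ.le (div_nonneg (hT n k ω) n.cast_nonneg) hTδ hδa.le

theorem lindeberg_condition_from_bound
    {Ω : Type*} [MeasurableSpace Ω] (μ : Measure Ω) [IsProbabilityMeasure μ]
    (ν C : ℝ) (hν : 0 < ν) (hC : 0 < C)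
    (T : ℕ → ℕ → Ω → ℝ) (hT : ∀ n k ω, 0 ≤ T n k ω)
    -- L n k ε is the conditional expectation E[(m_{n,k})² 1{|m_{n,k}| > ε√n} | F_{n,k-1}]
    (L : ℕ → ℕ → ℝ → Ω → ℝ) (hL : ∀ n k ε ω, 0 ≤ L n k ε ω)
    (hmeas : ∀ n k ε, Measurable (L n k ε)) (hTmeas : ∀ n k, Measurable (T n k))
    (hbound : ∀ n k (ε : ℝ), 0 < ε → ∀ ω,
      L n k ε ω ≤ T n k ω * C * (T n k ω / n) ^ (ν / (2 + ν)) / ε ^ (2 * ν / (2 + ν)))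
    (ℓlim : ℝ)
    (hTavg : TendstoInMeasure μ
      (fun (n : ℕ) ω => (n : ℝ)⁻¹ * ∑ k ∈ Finset.range n, T n k ω) atTop (fun _ => ℓlim))
    (hTmax : ∀ δ : ℝ, 0 < δ →
      Tendsto (fun n => μ {ω | ∃ k < n, T n k ω / n > δ}) atTop (nhds 0)) :
    ∀ ε : ℝ, 0 < ε →
      TendstoInMeasure μ
        (fun (n : ℕ) ω => (n : ℝ)⁻¹ * ∑ k ∈ Finset.range n, L n k ε ω) atTop (fun _ => 0) :=
  lindeberg_condition_from_bound_general μ ν C hν hC T hT L hL hbound ℓlim hTavg hTmax
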